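/- Let k be a field, V a finite-dimensional k-vector space, S = Sym(V) with its standard grading, and M a graded S-module with M_m = 0 for all m < 0. Fix p ≥ 0. Then the degree-p homogeneous component of Tor_p^S(M, k) is isomorphic to the kernel of the Koszul differential M_0 ⊗ ∧^{p}V → M_1 ⊗ ∧^{p-1}V. Moreover, for every q < 0, the degree-(p+q) homogeneous component of Tor_p^S(M, k) vanishes. -/

import Mathlib

universe u

open TensorAlgebra in
/-- The relation on the tensor algebra defining the symmetric algebra. -/
inductive SymRel (k : Type u) (V : Type u) [CommRing k] [AddCommGroup V] [Module k V] :
    TensorAlgebra k V → TensorAlgebra k V → Prop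
  | mul_comm (x y : V) : SymRel k V (ι k x * ι k y) (ι k y * ι k x)

/-- The symmetric algebra `Sym(V)` of a `k`-module `V`, as the quotient of the tensor
algebra by the commutativity relations. -/
def SymmetricAlg (k : Type u) (V : Type u) [CommRing k] [AddCommGroup V] [Module k V] : Type u :=
  RingQuot (SymRel k V)

namespace SymmetricAlg

variable (k V : Type u) [CommRing k] [AddCommGroup V] [Module k V]

instance : Ring (SymmetricAlg k V) := inferInstanceAs (Ring (RingQuot (SymRel k V)))
instance : Algebra k (SymmetricAlg k V) := inferInstanceAs (Algebra k (RingQuot (SymRel k V)))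

/-- The canonical inclusion of `V` into `Sym(V)`. -/
def ιSym : V →ₗ[k] SymmetricAlg k V :=
  ((RingQuot.mkAlgHom k (SymRel k V)).toLinearMap).comp (TensorAlgebra.ι k)

lemma comm_aux (x : TensorAlgebra k V) :
    ∀ y : TensorAlgebra k V, RingQuot.mkAlgHom k (SymRel k V) x * RingQuot.mkAlgHom k (SymRel k V) y
      = RingQuot.mkAlgHom k (SymRel k V) y * RingQuot.mkAlgHom k (SymRel k V) x := by
  induction x using TensorAlgebra.induction with
  | algebraMap r =>
      intro y
      rw [AlgHom.commutes]
      exact Algebra.commutes r _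
  | ι v =>
      intro y
      induction y using TensorAlgebra.induction with
      | algebraMap r =>
          rw [AlgHom.commutes]
          exact (Algebra.commutes r _).symm
      | ι w =>
          have := RingQuot.mkAlgHom_rel k (SymRel.mul_comm (k := k) (V := V) v w)
          rwa [map_mul, map_mul] at this
      | mul y₁ y₂ h1 h2 =>
          rw [map_mul, ← mul_assoc, h1, mul_assoc, h2, mul_assoc]
      | add y₁ y₂ h1 h2 =>
          rw [map_add, add_mul, mul_add, h1, h2]
  | mul x₁ x₂ h1 h2 =>
      intro y
      rw [map_mul, mul_assoc, h2 y, ← mul_assoc, h1 y, mul_assoc]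
  | add x₁ x₂ h1 h2 =>
      intro y
      rw [map_add, add_mul, mul_add, h1 y, h2 y]

instance : CommRing (SymmetricAlg k V) :=
  { (inferInstanceAs (Ring (SymmetricAlg k V)) : Ring (SymmetricAlg k V)) with
    mul_comm := fun a b => by
      obtain ⟨x, rfl⟩ := RingQuot.mkAlgHom_surjective k (SymRel k V) a
      obtain ⟨y, rfl⟩ := RingQuot.mkAlgHom_surjective k (SymRel k V) b
      exact comm_aux k V x y }

/-- The augmentation map `Sym(V) → k` killing `V`. -/
def aug : SymmetricAlg k V →ₐ[k] k :=
  RingQuot.liftAlgHom k ⟨TensorAlgebra.lift k (0 : V →ₗ[k] k), by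
    rintro x y ⟨a, b⟩
    simp⟩

end SymmetricAlg

open scoped TensorProduct

/-- The `n`-fold wedge `v₁ ∧ ⋯ ∧ vₙ`, as an element of the `n`-th exterior power. -/
def wedge (k : Type u) {V : Type u} [CommRing k] [AddCommGroup V] [Module k V]
    {n : ℕ} (v : Fin n → V) : ⋀[k]^n V :=
  ⟨ExteriorAlgebra.ιMulti k n v, ExteriorAlgebra.ιMulti_range k n (Set.mem_range_self v)⟩

/-- For a graded module `M = ⊕ 𝓜 m`, the degree-`n` strand of the Koszul complex at
homological index `j`: the subspace `𝓜 (n - j) ⊗ ∧^j V` of `M ⊗ ∧^j V`. -/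
noncomputable def koszulStrand {k V M : Type u} [Field k] [AddCommGroup V] [Module k V]
    [AddCommGroup M] [Module k M] (𝓜 : ℤ → Submodule k M) (n : ℤ) (j : ℕ) :
    Submodule k (M ⊗[k] ⋀[k]^j V) :=
  LinearMap.range (LinearMap.rTensor (⋀[k]^j V) (𝓜 (n - j)).subtype)

/-!
Since `M` vanishes in negative degrees, the degree-`p` strand of the Koszul complex is zero at
homological index `p + 1` (it is `M₋₁ ⊗ ∧^{p+1} V`), so its homology at index `p` is just the
cycles in `M₀ ⊗ ∧^p V`. Tensoring over a field preserves injectivity, so `M₀ ⊗ ∧^p V` and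
`M₁ ⊗ ∧^{p-1} V` embed into `M ⊗ ∧^p V` and `M ⊗ ∧^{p-1} V`, and these cycles are identified
with `ker D`. In degree `p + q` with `q < 0` the strand at index `p` is `M_q ⊗ ∧^p V = 0`.
-/

theorem LinearMap.ker_eq_comap_ker_of_comp_eq {R A B X Y : Type*} [CommRing R]
    [AddCommGroup A] [Module R A] [AddCommGroup B] [Module R B]
    [AddCommGroup X] [Module R X] [AddCommGroup Y] [Module R Y]
    {D : A →ₗ[R] B} {d : X →ₗ[R] Y} {ι₀ : A →ₗ[R] X} {ι₁ : B →ₗ[R] Y}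
    (hι₁ : Function.Injective ι₁) (h : ι₁ ∘ₗ D = d ∘ₗ ι₀) :
    LinearMap.ker D = (LinearMap.ker d).comap ι₀ := by
  rw [← LinearMap.ker_comp_of_ker_eq_bot D (LinearMap.ker_eq_bot.mpr hι₁), h,
    LinearMap.ker_comp]

section KoszulStrand

variable {k V M : Type u} [Field k] [AddCommGroup V] [Module k V] [AddCommGroup M] [Module k M]

theorem Submodule.rTensor_subtype_injective (W : Type*) [AddCommGroup W] [Module k W]
    (N : Submodule k M) : Function.Injective (LinearMap.rTensor W N.subtype) :=
  Module.Flat.rTensor_preserves_injective_linearMap _ N.injective_subtype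

theorem koszulStrand_eq_bot {𝓜 : ℤ → Submodule k M} {n : ℤ} {j : ℕ} (h : 𝓜 (n - j) = ⊥) :
    koszulStrand (V := V) 𝓜 n j = ⊥ := by
  rw [koszulStrand, LinearMap.range_eq_bot]
  ext x y
  simp [(Submodule.eq_bot_iff _).mp h x.1 x.2]

theorem koszulStrand_self (𝓜 : ℤ → Submodule k M) (j : ℕ) :
    koszulStrand (V := V) 𝓜 j j =
      LinearMap.range (LinearMap.rTensor (⋀[k]^j V) (𝓜 0).subtype) := by
  rw [koszulStrand, sub_self]

end KoszulStrand

theorem statement5_general (k V M : Type u) [Field k] [AddCommGroup V] [Module k V]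
    [AddCommGroup M] [Module k M]
    -- the grading on `M`, making it a graded `S`-module, vanishing in negative degrees
    (𝓜 : ℤ → Submodule k M)
    (hneg : ∀ m : ℤ, m < 0 → 𝓜 m = ⊥)
    -- the Koszul differentials of the complex `M ⊗ ∧^• V`
    (d : ∀ j : ℕ, (M ⊗[k] ⋀[k]^j V) →ₗ[k] (M ⊗[k] ⋀[k]^(j - 1) V))
    (p : ℕ)
    -- the Koszul differential `𝓜 0 ⊗ ∧^p V → 𝓜 1 ⊗ ∧^{p-1} V`, characterised as the
    -- restriction of the Koszul differential `d p` to the graded pieces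
    (D : (↥(𝓜 0) ⊗[k] ⋀[k]^p V) →ₗ[k] (↥(𝓜 1) ⊗[k] ⋀[k]^(p - 1) V))
    (hD : (LinearMap.rTensor (⋀[k]^(p - 1) V) (𝓜 1).subtype).comp D =
      (d p).comp (LinearMap.rTensor (⋀[k]^p V) (𝓜 0).subtype)) :
    (∃ φ : ↥(koszulStrand (V := V) 𝓜 (p : ℤ) p ⊓ LinearMap.ker (d p)) →ₗ[k]
        ↥(LinearMap.ker D),
      Function.Surjective φ ∧
      LinearMap.ker φ =
        Submodule.comap (koszulStrand (V := V) 𝓜 (p : ℤ) p ⊓ LinearMap.ker (d p)).subtype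
          (Submodule.map (d (p + 1)) (koszulStrand (V := V) 𝓜 (p : ℤ) (p + 1)))) ∧
    (∀ q : ℤ, q < 0 →
      koszulStrand (V := V) 𝓜 ((p : ℤ) + q) p ⊓ LinearMap.ker (d p) ≤
        Submodule.map (d (p + 1)) (koszulStrand (V := V) 𝓜 ((p : ℤ) + q) (p + 1))) := by
  let ι₀ := LinearMap.rTensor (⋀[k]^p V) (𝓜 0).subtype
  have hcycles :
      koszulStrand (V := V) 𝓜 p p ⊓ LinearMap.ker (d p) = (LinearMap.ker D).map ι₀ := by
    rw [LinearMap.ker_eq_comap_ker_of_comp_eq (Submodule.rTensor_subtype_injective _ _) hD,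
      Submodule.map_comap_eq, koszulStrand_self]
  have hboundaries : koszulStrand (V := V) 𝓜 p (p + 1) = ⊥ :=
    koszulStrand_eq_bot (hneg _ (by omega))
  let φ := LinearEquiv.ofEq _ _ hcycles ≪≫ₗ
    (Submodule.equivMapOfInjective ι₀ (Submodule.rTensor_subtype_injective _ _) (LinearMap.ker D)).symm
  refine ⟨⟨φ.toLinearMap, φ.surjective, ?_⟩, fun q hq => ?_⟩
  · rw [LinearEquiv.ker, hboundaries, Submodule.map_bot, Submodule.comap_bot,
      Submodule.ker_subtype]
  · rw [koszulStrand_eq_bot (hneg _ (by omega))]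
    exact inf_le_left.trans bot_le

/-- Let `M` be a graded module over `S = Sym(V)` with `𝓜 m = 0` for `m < 0`,
and fix `p ≥ 0`.  Then the degree-`p` homogeneous component of `Tor_p^S(M,k)` — i.e. the homology
at homological index `p` of the degree-`p` strand of the Koszul complex `M ⊗ ∧^• V` — is
isomorphic to the kernel of the Koszul differential `𝓜 0 ⊗ ∧^p V → 𝓜 1 ⊗ ∧^{p-1} V`.
Moreover for every `q < 0` the degree-`(p+q)` homogeneous component of `Tor_p^S(M,k)` vanishes,
i.e. the corresponding strand of the Koszul complex is exact at homological index `p`. -/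
theorem statement5 (k V M : Type u) [Field k] [AddCommGroup V] [Module k V]
    [FiniteDimensional k V]
    [AddCommGroup M] [Module k M] [Module (SymmetricAlg k V) M]
    [IsScalarTower k (SymmetricAlg k V) M]
    -- the grading on `M`, making it a graded `S`-module, vanishing in negative degrees
    (𝓜 : ℤ → Submodule k M)
    (hinternal : DirectSum.IsInternal fun m : ℤ => 𝓜 m)
    (hgr : ∀ (m : ℤ) (v : V) (x : M), x ∈ 𝓜 m → SymmetricAlg.ιSym k V v • x ∈ 𝓜 (m + 1))
    (hneg : ∀ m : ℤ, m < 0 → 𝓜 m = ⊥)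
    -- the Koszul differentials of the complex `M ⊗ ∧^• V`
    (d : ∀ j : ℕ, (M ⊗[k] ⋀[k]^j V) →ₗ[k] (M ⊗[k] ⋀[k]^(j - 1) V))
    (hd0 : d 0 = 0)
    (hd : ∀ (j : ℕ) (m : M) (v : Fin (j + 1) → V),
      d (j + 1) (m ⊗ₜ[k] wedge k v) =
        ∑ i : Fin (j + 1), ((-1 : ℤ) ^ (i : ℕ)) •
          ((SymmetricAlg.ιSym k V (v i) • m) ⊗ₜ[k]
            wedge k (fun l : Fin j => v (i.succAbove l))))
    (p : ℕ)
    -- the Koszul differential `𝓜 0 ⊗ ∧^p V → 𝓜 1 ⊗ ∧^{p-1} V`, characterised as the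
    -- restriction of the Koszul differential `d p` to the graded pieces
    (D : (↥(𝓜 0) ⊗[k] ⋀[k]^p V) →ₗ[k] (↥(𝓜 1) ⊗[k] ⋀[k]^(p - 1) V))
    (hD : (LinearMap.rTensor (⋀[k]^(p - 1) V) (𝓜 1).subtype).comp D =
      (d p).comp (LinearMap.rTensor (⋀[k]^p V) (𝓜 0).subtype)) :
    (∃ φ : ↥(koszulStrand (V := V) 𝓜 (p : ℤ) p ⊓ LinearMap.ker (d p)) →ₗ[k]
        ↥(LinearMap.ker D),
      Function.Surjective φ ∧
      LinearMap.ker φ =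
        Submodule.comap (koszulStrand (V := V) 𝓜 (p : ℤ) p ⊓ LinearMap.ker (d p)).subtype
          (Submodule.map (d (p + 1)) (koszulStrand (V := V) 𝓜 (p : ℤ) (p + 1)))) ∧
    (∀ q : ℤ, q < 0 →
      koszulStrand (V := V) 𝓜 ((p : ℤ) + q) p ⊓ LinearMap.ker (d p) ≤
        Submodule.map (d (p + 1)) (koszulStrand (V := V) 𝓜 ((p : ℤ) + q) (p + 1))) :=
  statement5_general k V M 𝓜 hneg d p D hD
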